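/- Let f: ℤ → ℝ be almost periodic (its set of translates is precompact in ℓ∞(ℤ)) with hull U and normalized Haar measure μ (for the compact abelian group structure on U extending translation). If there exists a continuous character η: U → S¹ with η surjective and f̂(η) := ∫_U g(0) conj(η(g)) dμ(g) ≠ 0, then for all ε > 0, μ({g ∈ U : ‖Rg − g‖_∞ ≤ ε}) ≤ ε / (2|f̂(η)|). -/

import Mathlib

/-!
For `g` in the almost symmetric set, `|ι g (-n) - ι g n| ≤ ε` says that `h ↦ ι (g h) 0` and
`h ↦ ι (g h⁻¹) 0` are `ε`-close on the translates `t n`, hence, by density, on all of `U`.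
Integrated against `conj ∘ η`, these two functions give `η g * f̂(η)` and its conjugate, so
`2 |Im (η g * f̂(η))| ≤ ε`. Thus `η` maps the set into the band `|Im (w * f̂(η))| ≤ ε / 2` of the
circle. As `η` is surjective, it pushes `μ` forward to the Haar probability measure of the circle,
under which, by Jordan's inequality `2 |θ| / π ≤ |sin θ|`, the band `|Im w| ≤ s` has measure at
most `s`.
-/

open MeasureTheory Real Set ComplexConjugate

noncomputable instance : MeasurableSpace Circle := borel Circle

instance : BorelSpace Circle := ⟨rfl⟩

instance : Fact (0 < 2 * π) := ⟨two_pi_pos⟩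

theorem volume_setOf_abs_sin_le_inter_Ioc_le (s : ℝ) :
    volume ({θ : ℝ | |sin θ| ≤ s} ∩ Ioc (-(π / 2)) (-(π / 2) + 2 * π)) ≤
      ENNReal.ofReal (2 * π) * ENNReal.ofReal s := by
  set b := π / 2 * s
  have hsub : {θ : ℝ | |sin θ| ≤ s} ∩ Ioc (-(π / 2)) (-(π / 2) + 2 * π) ⊆
      Icc (-b) b ∪ Icc (π - b) (π + b) := by
    rintro θ ⟨hθ, hθl, hθr⟩
    have hπ := pi_pos
    have jordan : ∀ x, |x| ≤ π / 2 → |sin x| ≤ s → |x| ≤ b := fun x hx hs => by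
      have := mul_abs_le_abs_sin hx
      rw [div_mul_eq_mul_div, div_le_iff₀ hπ] at this
      simp only [b]; nlinarith
    rcases le_or_gt θ (π / 2) with h | h
    · exact .inl (abs_le.1 (jordan θ (abs_le.2 ⟨hθl.le, h⟩) hθ))
    · have := jordan (θ - π) (abs_le.2 ⟨by linarith, by linarith⟩)
        (by rwa [sin_sub_pi, abs_neg])
      exact .inr ⟨by linarith [(abs_le.1 this).1], by linarith [(abs_le.1 this).2]⟩
  calc _ ≤ volume (Icc (-b) b ∪ Icc (π - b) (π + b)) := measure_mono hsub
    _ ≤ volume (Icc (-b) b) + volume (Icc (π - b) (π + b)) := measure_union_le _ _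
    _ = ENNReal.ofReal (2 * π) * ENNReal.ofReal s := by
      simp only [volume_Icc, b]
      rw [show π / 2 * s - -(π / 2 * s) = π * s by ring,
        show π + π / 2 * s - (π - π / 2 * s) = π * s by ring,
        ← ENNReal.ofReal_mul two_pi_pos.le, mul_assoc, ENNReal.ofReal_mul zero_le_two,
        ENNReal.ofReal_ofNat, two_mul]

theorem Circle.eq_map_haarAddCircle (ν : Measure Circle) [ν.IsHaarMeasure]
    [IsProbabilityMeasure ν] :
    ν = AddCircle.haarAddCircle.map AddCircle.homeomorphCircle' := by
  set f := AddCircle.homeomorphCircle'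
  have hf : Measurable f := f.continuous.measurable
  have : (AddCircle.haarAddCircle.map f).IsMulLeftInvariant := by
    refine ⟨fun w => ?_⟩
    have : (w * ·) ∘ f = f ∘ (f.symm w + ·) := by
      funext y
      rw [Function.comp_apply, Function.comp_apply,
        show f (f.symm w + y) = f (f.symm w) * f y from Real.Angle.toCircle_add _ _,
        f.apply_symm_apply]
    rw [Measure.map_map (measurable_const_mul w) hf, this,
      ← Measure.map_map hf (measurable_const_add _), map_add_left_eq_self]
  have : IsProbabilityMeasure (AddCircle.haarAddCircle.map f) :=
    Measure.isProbabilityMeasure_map hf.aemeasurable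
  have : (AddCircle.haarAddCircle.map f).IsOpenPosMeasure :=
    f.continuous.isOpenPosMeasure_map f.surjective
  have : (AddCircle.haarAddCircle.map f).IsHaarMeasure :=
    { lt_top_of_isCompact := fun _ _ => measure_lt_top _ _ }
  exact Measure.isHaarMeasure_eq_of_isProbabilityMeasure _ _

theorem Circle.measure_abs_im_le (ν : Measure Circle) [ν.IsHaarMeasure]
    [IsProbabilityMeasure ν] (s : ℝ) :
    ν {w : Circle | |(w : ℂ).im| ≤ s} ≤ ENNReal.ofReal s := by
  have hS : MeasurableSet {w : Circle | |(w : ℂ).im| ≤ s} :=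
    (isClosed_le (by fun_prop) continuous_const).measurableSet
  have hpre : QuotientAddGroup.mk ⁻¹' (AddCircle.homeomorphCircle' ⁻¹'
      {w : Circle | |(w : ℂ).im| ≤ s}) = {θ : ℝ | |sin θ| ≤ s} := by
    ext θ
    simp [AddCircle.homeomorphCircle'_apply_mk, Circle.coe_exp, Complex.exp_ofReal_mul_I_im]
  have hvol := AddCircle.add_projection_respects_measure (2 * π) (-(π / 2))
    (hS.preimage AddCircle.homeomorphCircle'.continuous.measurable)
  rw [hpre] at hvol
  have := hvol.trans_le (volume_setOf_abs_sin_le_inter_Ioc_le s)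
  rw [AddCircle.volume_eq_smul_haarAddCircle, Measure.smul_apply, smul_eq_mul,
    ← Measure.map_apply AddCircle.homeomorphCircle'.continuous.measurable hS,
    ← Circle.eq_map_haarAddCircle ν] at this
  have h2π : ENNReal.ofReal (2 * π) ≠ 0 := by simp [pi_pos]
  rwa [ENNReal.mul_le_mul_iff_right h2π ENNReal.ofReal_ne_top] at this

theorem Circle.measure_abs_im_mul_le (ν : Measure Circle) [ν.IsHaarMeasure]
    [IsProbabilityMeasure ν] {c : ℂ} (hc : c ≠ 0) (s : ℝ) :
    ν {w : Circle | |((w : ℂ) * c).im| ≤ s} ≤ ENNReal.ofReal (s / ‖c‖) := by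
  set u := Circle.exp (Complex.arg c)
  have hc' : 0 < ‖c‖ := norm_pos_iff.2 hc
  have hrot : {w : Circle | |((w : ℂ) * c).im| ≤ s} =
      (· * u) ⁻¹' {w : Circle | |(w : ℂ).im| ≤ s / ‖c‖} := by
    have hu : c = ‖c‖ * (u : ℂ) := by
      rw [Circle.coe_exp, Complex.norm_mul_exp_arg_mul_I]
    ext w
    have : ((w : ℂ) * c).im = ‖c‖ * ((w * u : Circle) : ℂ).im := by
      rw [Circle.coe_mul, ← Complex.im_ofReal_mul, mul_left_comm, ← hu]
    simp only [mem_ofPred_eq, mem_preimage, this, abs_mul, abs_of_pos hc', le_div_iff₀' hc']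
  rw [hrot, measure_preimage_mul_right]
  exact Circle.measure_abs_im_le ν _

section Character

variable {G : Type*} [Group G] [MeasurableSpace G] (μ : Measure G)

theorem integral_mul_left_mul_conj_char [MeasurableMul G] [μ.IsMulLeftInvariant]
    (F : G → ℂ) (η : G →* Circle) (g : G) :
    ∫ h, F (g * h) * conj (η h : ℂ) ∂μ = η g * ∫ h, F h * conj (η h : ℂ) ∂μ := by
  rw [← integral_mul_left_eq_self _ g⁻¹, ← integral_const_mul]
  congr 1 with h
  rw [mul_inv_cancel_left, map_mul, map_inv, Circle.coe_mul, Circle.coe_inv_eq_conj, map_mul,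
    Complex.conj_conj]
  ring

theorem integral_mul_inv_mul_conj_char [MeasurableMul G] [MeasurableInv G]
    [μ.IsMulLeftInvariant] [μ.IsInvInvariant] (F : G → ℝ) (η : G →* Circle) (g : G) :
    ∫ h, (F (g * h⁻¹) : ℂ) * conj (η h : ℂ) ∂μ =
      conj ((η g : ℂ) * ∫ h, (F h : ℂ) * conj (η h : ℂ) ∂μ) := by
  rw [← integral_mul_left_mul_conj_char, ← integral_conj, ← integral_inv_eq_self]
  congr 1 with h
  simp only [inv_inv, map_inv, Circle.coe_inv_eq_conj, map_mul, Complex.conj_conj,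
    Complex.conj_ofReal]

theorem two_mul_abs_im_char_mul_integral_le [TopologicalSpace G] [IsTopologicalGroup G]
    [CompactSpace G] [BorelSpace G] [IsProbabilityMeasure μ] [μ.IsMulLeftInvariant]
    [μ.IsInvInvariant] {F : G → ℝ} (hF : Continuous F) {η : G →* Circle} (hη : Continuous η)
    {g : G} {ε : ℝ} (hsymm : ∀ h, |F (g * h) - F (g * h⁻¹)| ≤ ε) :
    2 * |((η g : ℂ) * ∫ h, (F h : ℂ) * conj (η h : ℂ) ∂μ).im| ≤ ε := by
  have hmul := integral_mul_left_mul_conj_char μ (fun h => (F h : ℂ)) η g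
  have hinv := integral_mul_inv_mul_conj_char μ F η g
  set z := (η g : ℂ) * ∫ h, (F h : ℂ) * conj (η h : ℂ) ∂μ
  have hint : ∀ k : G → G, Continuous k →
      Integrable (fun h => (F (k h) : ℂ) * conj (η h : ℂ)) μ := fun k hk =>
    (by fun_prop : Continuous _).integrable_of_hasCompactSupport
      (HasCompactSupport.of_compactSpace _)
  have hdiff : z - conj z = ∫ h, ((F (g * h) - F (g * h⁻¹) : ℝ) : ℂ) * conj (η h : ℂ) ∂μ := by
    rw [← hinv, ← hmul, ← integral_sub (hint _ (by fun_prop)) (hint _ (by fun_prop))]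
    simp only [Complex.ofReal_sub, sub_mul]
  have hbound : ‖z - conj z‖ ≤ ε := by
    rw [hdiff]
    refine (norm_integral_le_of_norm_le_const (C := ε) (.of_forall fun h => ?_)).trans_eq
      (by simp)
    rw [norm_mul, Complex.norm_real, Real.norm_eq_abs, Complex.norm_conj, Circle.norm_coe,
      mul_one]
    exact hsymm h
  rwa [Complex.sub_conj, norm_mul, Complex.norm_I, mul_one, Complex.norm_real,
    Real.norm_eq_abs, abs_mul, abs_two] at hbound

end Character

section Hull

variable {U : Type*} [CommGroup U] {ι : U → ℤ → ℝ} {t : ℤ → U}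

theorem apply_mul_translate_zero (htrans : ∀ (m : ℤ) (g : U) (n : ℤ), ι (t m * g) n = ι g (n + m))
    (g : U) (m : ℤ) : ι (g * t m) 0 = ι g m := by
  rw [mul_comm, htrans, zero_add]

theorem apply_mul_inv_translate_zero
    (htrans : ∀ (m : ℤ) (g : U) (n : ℤ), ι (t m * g) n = ι g (n + m)) (g : U) (m : ℤ) :
    ι (g * (t m)⁻¹) 0 = ι g (-m) := by
  rw [← neg_add_cancel m, ← htrans, mul_comm, inv_mul_cancel_right]

theorem abs_apply_mul_sub_apply_mul_inv_le [TopologicalSpace U] [IsTopologicalGroup U]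
    (hdense : Dense (range t))
    (htrans : ∀ (m : ℤ) (g : U) (n : ℤ), ι (t m * g) n = ι g (n + m))
    (hcont : Continuous fun g : U => ι g 0) {g : U} {ε : ℝ}
    (hg : ∀ n : ℤ, |ι g (-n) - ι g n| ≤ ε) (h : U) :
    |ι (g * h) 0 - ι (g * h⁻¹) 0| ≤ ε := by
  induction h using hdense.induction with
  | mem _ hk =>
    obtain ⟨m, rfl⟩ := hk
    rw [apply_mul_translate_zero htrans, apply_mul_inv_translate_zero htrans, abs_sub_comm]
    exact hg m
  | isClosed =>
    have : Continuous fun k => ι (g * k) 0 - ι (g * k⁻¹) 0 :=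
      (hcont.comp (continuous_const_mul g)).sub
        (hcont.comp ((continuous_const_mul g).comp continuous_inv))
    exact isClosed_le this.abs continuous_const

end Hull

theorem measure_almost_reflection_symmetric_hull_general {U : Type*} [CommGroup U]
    [TopologicalSpace U] [IsTopologicalGroup U] [CompactSpace U]
    [MeasurableSpace U] [BorelSpace U]
    (μ : Measure U) [μ.IsHaarMeasure] [IsProbabilityMeasure μ]
    (ι : U → ℤ → ℝ)
    (t : ℤ → U) (hdense : Dense (Set.range t))
    (htrans : ∀ (m : ℤ) (g : U) (n : ℤ), ι (t m * g) n = ι g (n + m))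
    (hcont : Continuous fun g : U => ι g 0)
    (η : U →* Circle) (hηc : Continuous η) (hηs : Function.Surjective η)
    (hFη : ∫ g, (ι g 0 : ℂ) * (starRingEnd ℂ) (η g : ℂ) ∂μ ≠ 0)
    (ε : ℝ) :
    μ {g : U | ∀ n : ℤ, |ι g (-n) - ι g n| ≤ ε} ≤
      ENNReal.ofReal
        (ε / (2 * ‖∫ g, (ι g 0 : ℂ) * (starRingEnd ℂ) (η g : ℂ) ∂μ‖)) := by
  set c := ∫ g, (ι g 0 : ℂ) * conj (η g : ℂ) ∂μ
  have hband : {g : U | ∀ n : ℤ, |ι g (-n) - ι g n| ≤ ε} ⊆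
      η ⁻¹' {w : Circle | |((w : ℂ) * c).im| ≤ ε / 2} := fun g hg => by
    have := two_mul_abs_im_char_mul_integral_le μ hcont hηc
      (abs_apply_mul_sub_apply_mul_inv_le hdense htrans hcont hg)
    simp only [mem_preimage, mem_ofPred_eq]
    linarith
  have : (μ.map η).IsHaarMeasure := Measure.isHaarMeasure_map_of_isFiniteMeasure μ η hηc hηs
  have : IsProbabilityMeasure (μ.map η) := Measure.isProbabilityMeasure_map hηc.aemeasurable
  calc _ ≤ μ (η ⁻¹' {w : Circle | |((w : ℂ) * c).im| ≤ ε / 2}) := measure_mono hband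
    _ = μ.map η {w : Circle | |((w : ℂ) * c).im| ≤ ε / 2} :=
      (Measure.map_apply hηc.measurable
        (isClosed_le (by fun_prop) continuous_const).measurableSet).symm
    _ ≤ _ := by
      rw [div_mul_eq_div_div]
      exact Circle.measure_abs_im_mul_le (μ.map η) hFη _

/-- Theorem 1 in explicit form: let `U` be the hull of an almost periodic
function, i.e. a compact abelian group whose elements are sequences (via the injection `ι`),
in which the translates `t m` of the original function are dense and the group law extends
translation: `ι (t m * g) n = ι g (n + m)` (so `ι (t 0) = ι 1` is the original function `f`).
Assume evaluation at `0` is continuous, `μ` is the normalized Haar measure, and there is a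
continuous surjective character `η : U → S¹` with `f̂(η) = ∫ ι g 0 conj(η g) dμ ≠ 0`. Then for
every `ε > 0`, `μ {g : ‖R (ι g) - ι g‖_∞ ≤ ε} ≤ ε / (2 |f̂(η)|)`. -/
theorem measure_almost_reflection_symmetric_hull {U : Type*} [CommGroup U]
    [TopologicalSpace U] [IsTopologicalGroup U] [CompactSpace U]
    [MeasurableSpace U] [BorelSpace U]
    (μ : Measure U) [μ.IsHaarMeasure] [IsProbabilityMeasure μ]
    (ι : U → ℤ → ℝ) (hι : Function.Injective ι)
    (t : ℤ → U) (hdense : Dense (Set.range t))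
    (htrans : ∀ (m : ℤ) (g : U) (n : ℤ), ι (t m * g) n = ι g (n + m))
    (hcont : Continuous fun g : U => ι g 0)
    (η : U →* Circle) (hηc : Continuous η) (hηs : Function.Surjective η)
    (hFη : ∫ g, (ι g 0 : ℂ) * (starRingEnd ℂ) (η g : ℂ) ∂μ ≠ 0)
    (ε : ℝ) (hε : 0 < ε) :
    μ {g : U | ∀ n : ℤ, |ι g (-n) - ι g n| ≤ ε} ≤
      ENNReal.ofReal
        (ε / (2 * ‖∫ g, (ι g 0 : ℂ) * (starRingEnd ℂ) (η g : ℂ) ∂μ‖)) :=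
  measure_almost_reflection_symmetric_hull_general μ ι t hdense htrans hcont η hηc hηs hFη ε
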